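/- For every even dimension d and every real unit vector φ ∈ R^d ⊂ C^d, the overlap |⟨φ, X^{d/2} Z φ⟩|² = 0, where X is the cyclic shift and Z the phase operator. Consequently, no real unit vector can be a fiducial state for a Weyl-Heisenberg covariant SIC-POVM in even dimension, since a fiducial would require this overlap to equal 1/(d+1). -/

import Mathlib

open Matrix

/-- The cyclic shift `X = ∑ₖ |k+1⟩⟨k|`. -/
def Xmat (d : ℕ) [NeZero d] : Matrix (Fin d) (Fin d) ℂ :=
  fun j k => if j = k + 1 then 1 else 0

/-- The phase operator `Z = ∑ₖ ω^k |k⟩⟨k|`, `ω = e^{2πi/d}`. -/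
noncomputable def Zmat (d : ℕ) : Matrix (Fin d) (Fin d) ℂ :=
  Matrix.diagonal fun j => Complex.exp (2 * Real.pi * Complex.I * ((j : ℕ) : ℂ) / d)

/-! For even `d` put `m = d / 2` and `M = X^m Z`. Then `Mᵀ = -M`: since `2m = 0` in `ℤ/d`, the
transpose of the shift `X^m` is `X^m` itself, and moving the phase across it costs `ω^m = -1`.
The quadratic form of a skew-symmetric matrix vanishes, and for a real vector `φ` the overlap
`⟨φ, M φ⟩` is that quadratic form, so it is `0 ≠ 1 / (d + 1)`. -/

open Fin.NatCast

theorem dotProduct_mulVec_self_eq_zero_of_transpose_eq_neg {n R : Type*} [Fintype n]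
    [NonUnitalCommRing R] [IsAddTorsionFree R] {A : Matrix n n R} (hA : Aᵀ = -A) (v : n → R) :
    v ⬝ᵥ (A *ᵥ v) = 0 := by
  refine self_eq_neg.mp ?_
  calc v ⬝ᵥ (A *ᵥ v) = (Aᵀ *ᵥ v) ⬝ᵥ v := by rw [dotProduct_mulVec, mulVec_transpose]
    _ = -(v ⬝ᵥ (A *ᵥ v)) := by rw [hA, neg_mulVec, neg_dotProduct, dotProduct_comm]

section WeylHeisenberg

variable {d : ℕ} [NeZero d]

theorem Xmat_pow_apply (n : ℕ) (j k : Fin d) :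
    (Xmat d ^ n) j k = if j = k + n then 1 else 0 := by
  induction n generalizing j with
  | zero => simp [one_apply, eq_comm]
  | succ n ih =>
    simp [pow_succ', mul_apply, Xmat, ih, add_assoc, add_comm (n : Fin d)]

theorem Xmat_pow_mul_Zmat_apply (n : ℕ) (j k : Fin d) :
    (Xmat d ^ n * Zmat d) j k =
      if j = k + n then Complex.exp (2 * Real.pi * Complex.I * ((k : ℕ) : ℂ) / d) else 0 := by
  simp [Zmat, mul_diagonal, Xmat_pow_apply]

theorem exp_two_pi_I_mul_val_add_div (a b : Fin d) :
    Complex.exp (2 * Real.pi * Complex.I * (((a + b : Fin d) : ℕ) : ℂ) / d) =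
      Complex.exp (2 * Real.pi * Complex.I * ((a : ℕ) : ℂ) / d) *
        Complex.exp (2 * Real.pi * Complex.I * ((b : ℕ) : ℂ) / d) := by
  have hd : (d : ℂ) ≠ 0 := Nat.cast_ne_zero.mpr (NeZero.ne d)
  obtain ⟨q, hq⟩ : ∃ q : ℕ, (((a + b : Fin d) : ℕ) : ℂ) + d * q = (a : ℕ) + (b : ℕ) :=
    ⟨((a : ℕ) + b) / d, by rw [Fin.val_add]; exact_mod_cast Nat.mod_add_div ((a : ℕ) + b) d⟩
  rw [← Complex.exp_add, Complex.exp_eq_exp_iff_exists_int]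
  refine ⟨-q, ?_⟩
  rw [← eq_sub_iff_add_eq] at hq
  rw [hq]
  push_cast
  field_simp
  ring

theorem natCast_half_add_self (hd : Even d) :
    ((d / 2 : ℕ) : Fin d) + ((d / 2 : ℕ) : Fin d) = 0 := by
  rw [← Nat.cast_add, ← two_mul, Nat.two_mul_div_two_of_even hd, Fin.natCast_self]

theorem exp_two_pi_I_mul_half_div (hd : Even d) :
    Complex.exp (2 * Real.pi * Complex.I * ((((d / 2 : ℕ) : Fin d) : ℕ) : ℂ) / d) = -1 := by
  have hd0 : (d : ℂ) ≠ 0 := Nat.cast_ne_zero.mpr (NeZero.ne d)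
  have hhalf : ((d / 2 : ℕ) : ℂ) * 2 = d := by
    exact_mod_cast Nat.div_mul_cancel hd.two_dvd
  rw [Fin.val_natCast, Nat.mod_eq_of_lt (Nat.div_lt_self (NeZero.pos d) one_lt_two),
    ← Complex.exp_pi_mul_I]
  congr 1
  rw [div_eq_iff hd0, ← hhalf]
  ring

theorem transpose_Xmat_pow_half_mul_Zmat (hd : Even d) :
    (Xmat d ^ (d / 2) * Zmat d)ᵀ = -(Xmat d ^ (d / 2) * Zmat d) := by
  ext j k
  have hswap : k = j + (d / 2 : ℕ) ↔ j = k + (d / 2 : ℕ) := by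
    constructor <;> rintro rfl <;> rw [add_assoc, natCast_half_add_self hd, add_zero]
  simp only [transpose_apply, Matrix.neg_apply, Xmat_pow_mul_Zmat_apply, hswap]
  split_ifs with h
  · rw [h, exp_two_pi_I_mul_val_add_div, exp_two_pi_I_mul_half_div hd, mul_neg_one]
  · rw [neg_zero]

end WeylHeisenberg

theorem no_real_fiducial_even_dim_general (d : ℕ) [NeZero d] (hd : Even d)
    (φ : Fin d → ℝ) :
    ‖star (fun j => (φ j : ℂ)) ⬝ᵥ
        ((Xmat d ^ (d / 2) * Zmat d) *ᵥ fun j => (φ j : ℂ))‖ ^ 2 = 0 ∧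
    ¬ (∀ j k : Fin d, (j, k) ≠ (0, 0) →
        ‖star (fun s => (φ s : ℂ)) ⬝ᵥ
            ((Xmat d ^ (j : ℕ) * Zmat d ^ (k : ℕ)) *ᵥ fun s => (φ s : ℂ))‖ ^ 2 =
          1 / (d + 1)) := by
  have hreal : star (fun j => (φ j : ℂ)) = fun j => (φ j : ℂ) := by
    ext j; exact Complex.conj_ofReal (φ j)
  have hzero : ‖star (fun j => (φ j : ℂ)) ⬝ᵥ
      ((Xmat d ^ (d / 2) * Zmat d) *ᵥ fun j => (φ j : ℂ))‖ ^ 2 = 0 := by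
    rw [hreal, dotProduct_mulVec_self_eq_zero_of_transpose_eq_neg
      (transpose_Xmat_pow_half_mul_Zmat hd), norm_zero, sq, mul_zero]
  refine ⟨hzero, fun hsic => ?_⟩
  have hd2 : 2 ≤ d := by
    have := Nat.even_iff.mp hd
    have := NeZero.pos d
    omega
  have hne : ((⟨d / 2, by omega⟩ : Fin d), (1 : Fin d)) ≠ (0, 0) := by
    simp only [Ne, Prod.mk.injEq, Fin.one_eq_zero_iff, not_and]
    omega
  have h := hsic ⟨d / 2, by omega⟩ 1 hne
  rw [Fin.val_one', Nat.mod_eq_of_lt hd2, pow_one, hzero] at h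
  have : (0 : ℝ) < 1 / (d + 1) := by positivity
  exact this.ne h

/-- For every even `d` and every real unit vector `φ ∈ ℝ^d ⊂ ℂ^d`, the
overlap `|⟨φ, X^{d/2} Z φ⟩|² = 0`; consequently `φ` cannot be a fiducial state of a
Weyl-Heisenberg covariant SIC-POVM (which would require this overlap to be `1/(d+1)`). -/
theorem no_real_fiducial_even_dim (d : ℕ) [NeZero d] (hd : Even d)
    (φ : Fin d → ℝ) (hunit : ∑ j, φ j ^ 2 = 1) :
    ‖star (fun j => (φ j : ℂ)) ⬝ᵥ
        ((Xmat d ^ (d / 2) * Zmat d) *ᵥ fun j => (φ j : ℂ))‖ ^ 2 = 0 ∧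
    ¬ (∀ j k : Fin d, (j, k) ≠ (0, 0) →
        ‖star (fun s => (φ s : ℂ)) ⬝ᵥ
            ((Xmat d ^ (j : ℕ) * Zmat d ^ (k : ℕ)) *ᵥ fun s => (φ s : ℂ))‖ ^ 2 =
          1 / (d + 1)) :=
  no_real_fiducial_even_dim_general d hd φ
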